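/- Fix η > 0. Let σ₀ ∈ (0,∞)^k and suppose E attains its infimum over M_{σ₀}^r at a point (u₀,ω₀) with Λ(u₀,ω₀) < √(2α) + η. Then there exists δ > 0 such that for every σ ∈ (0,∞)^k with |σ − σ₀| < δ, one has inf_{M_σ^r} E < (√(2α) + η)·∑_{j=1}^k σ_j; indeed, setting ω_σ^j := ω₀^j σ_j/σ₀^j, the pair (u₀, ω_σ) belongs to M_σ^r and Λ(u₀,ω_σ) < √(2α) + η. -/

import Mathlib

/-!
Replacing `ω₀` by `ω_σ` leaves `u₀` untouched and turns the charges `σ₀` into `σ`, so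
`(u₀, ω_σ) ∈ M_σ^r`. Since `σ ↦ Λ(u₀, ω_σ)` is continuous at `σ₀`, the strict inequality
persists near `σ₀`, and as `E ≥ 0` the infimum is at most `E(u₀, ω_σ) = Λ(u₀, ω_σ) ∑ σ_j`.
-/

open MeasureTheory Filter Topology RealInnerProductSpace

noncomputable section

/-- The Euclidean norm of a vector in `ℝ^k`. -/
def vnorm {k : ℕ} (z : Fin k → ℝ) : ℝ := Real.sqrt (∑ j, (z j) ^ 2)

/-- The `j`-th partial derivative of `G`. -/
def pd {k : ℕ} (G : (Fin k → ℝ) → ℝ) (j : Fin k) (z : Fin k → ℝ) : ℝ :=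
  fderiv ℝ G z (Pi.single j 1)

/-- `F(z) = G(z) + ½ ∑_j m_j² z_j²`. -/
def Ffun {k : ℕ} (m : Fin k → ℝ) (G : (Fin k → ℝ) → ℝ) (z : Fin k → ℝ) : ℝ :=
  G z + (1 / 2) * ∑ j, (m j) ^ 2 * (z j) ^ 2

/-- `α = inf { F(z)/|z|² : z ∈ [0,∞)^k \ {0} }`. -/
def alphaInf {k : ℕ} (m : Fin k → ℝ) (G : (Fin k → ℝ) → ℝ) : ℝ :=
  sInf {r | ∃ z : Fin k → ℝ, (∀ j, 0 ≤ z j) ∧ z ≠ 0 ∧ r = Ffun m G z / ∑ j, (z j) ^ 2}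

/-- `α_j = inf { F(z)/∑_{h≠j} z_h² : z ∈ [0,∞)^k, ∑_{h≠j} z_h² ≠ 0 }`. -/
def alphaJ {k : ℕ} (m : Fin k → ℝ) (G : (Fin k → ℝ) → ℝ) (j : Fin k) : ℝ :=
  sInf {r | ∃ z : Fin k → ℝ, (∀ h, 0 ≤ z h) ∧
    (∑ h ∈ Finset.univ.erase j, (z h) ^ 2) ≠ 0 ∧
    r = Ffun m G z / ∑ h ∈ Finset.univ.erase j, (z h) ^ 2}

/-- Membership in `H¹(ℝⁿ, ℝ)`: the function and its gradient are in `L²`. -/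
def MemH1 {n : ℕ} (f : EuclideanSpace ℝ (Fin n) → ℝ) : Prop :=
  MemLp f 2 (volume : Measure (EuclideanSpace ℝ (Fin n))) ∧
  MemLp (fun x => gradient f x) 2 (volume : Measure (EuclideanSpace ℝ (Fin n)))

/-- Membership in `H = H¹(ℝⁿ, ℝ^k)`, componentwise. -/
def MemH1k {n k : ℕ} (u : EuclideanSpace ℝ (Fin n) → Fin k → ℝ) : Prop :=
  ∀ j, MemH1 (fun x => u x j)

/-- Radially symmetric (vector-valued) functions. -/
def Radial {n k : ℕ} (u : EuclideanSpace ℝ (Fin n) → Fin k → ℝ) : Prop :=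
  ∀ x y : EuclideanSpace ℝ (Fin n), ‖x‖ = ‖y‖ → u x = u y

/-- The squared `H¹` norm of a scalar function. -/
def H1normSq {n : ℕ} (f : EuclideanSpace ℝ (Fin n) → ℝ) : ℝ :=
  (∫ x, (f x) ^ 2) + ∫ x, ‖gradient f x‖ ^ 2

/-- The squared `H` norm, `‖u‖_H² = ∑_j ‖u_j‖_{H¹}²`. -/
def HnormSq {n k : ℕ} (u : EuclideanSpace ℝ (Fin n) → Fin k → ℝ) : ℝ :=
  ∑ j, H1normSq (fun x => u x j)

/-- The energy functional `E`. -/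
def En {n k : ℕ} (m : Fin k → ℝ) (G : (Fin k → ℝ) → ℝ)
    (u : EuclideanSpace ℝ (Fin n) → Fin k → ℝ) (ω : Fin k → ℝ) : ℝ :=
  (1 / 2) * ∑ j, ((∫ x, ‖gradient (fun y => u y j) x‖ ^ 2) +
      ((m j) ^ 2 + (ω j) ^ 2) * ∫ x, (u x j) ^ 2) +
  ∫ x, G (u x)

/-- The charges `C_j(u, ω) = ω_j ∫ u_j²`. -/
def Ch {n k : ℕ} (u : EuclideanSpace ℝ (Fin n) → Fin k → ℝ) (ω : Fin k → ℝ) (j : Fin k) : ℝ :=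
  ω j * ∫ x, (u x j) ^ 2

/-- The constraint set `M_σ`. -/
def InM {n k : ℕ} (σ : Fin k → ℝ) (u : EuclideanSpace ℝ (Fin n) → Fin k → ℝ)
    (ω : Fin k → ℝ) : Prop :=
  MemH1k u ∧ (∀ j, 0 ≤ ω j) ∧ ∀ j, Ch u ω j = σ j

/-- The radial constraint set `M_σ^r`. -/
def InMr {n k : ℕ} (σ : Fin k → ℝ) (u : EuclideanSpace ℝ (Fin n) → Fin k → ℝ)
    (ω : Fin k → ℝ) : Prop :=
  InM σ u ω ∧ Radial u

/-- The energy/charge ratio `Λ`. -/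
def Lam {n k : ℕ} (m : Fin k → ℝ) (G : (Fin k → ℝ) → ℝ)
    (u : EuclideanSpace ℝ (Fin n) → Fin k → ℝ) (ω : Fin k → ℝ) : ℝ :=
  En m G u ω / ∑ j, Ch u ω j

lemma neg_half_mass_le_integral_comp {n k : ℕ} {m : Fin k → ℝ} {G : (Fin k → ℝ) → ℝ}
    (hF : ∀ z : Fin k → ℝ, 0 ≤ Ffun m G z) {v : EuclideanSpace ℝ (Fin n) → Fin k → ℝ}
    (hv : ∀ j, MemLp (fun x => v x j) 2 volume) :
    -((1 / 2) * ∑ j, (m j) ^ 2 * ∫ x, (v x j) ^ 2) ≤ ∫ x, G (v x) := by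
  have hsq : ∀ j, Integrable (fun x => (m j) ^ 2 * (v x j) ^ 2) volume := fun j =>
    (hv j).integrable_sq.const_mul _
  by_cases hG : Integrable (fun x => G (v x)) volume
  · calc -((1 / 2) * ∑ j, (m j) ^ 2 * ∫ x, (v x j) ^ 2)
        = ∫ x, -((1 / 2) * ∑ j, (m j) ^ 2 * (v x j) ^ 2) := by
          rw [integral_neg, integral_const_mul, integral_finsetSum _ fun j _ => hsq j]
          simp only [integral_const_mul]
      _ ≤ ∫ x, G (v x) := by
          refine integral_mono ((integrable_finsetSum _ fun j _ => hsq j).const_mul _).neg hG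
            fun x => ?_
          have := hF (v x)
          simp only [Ffun] at this
          linarith
  · -- `∫ G ∘ v = 0` is a junk value here, but the left side is `≤ 0` anyway
    rw [integral_undef hG]
    have : 0 ≤ ∑ j, (m j) ^ 2 * ∫ x, (v x j) ^ 2 :=
      Finset.sum_nonneg fun j _ => mul_nonneg (sq_nonneg _) (integral_nonneg fun _ => sq_nonneg _)
    linarith

lemma En_nonneg {n k : ℕ} {m : Fin k → ℝ} {G : (Fin k → ℝ) → ℝ}
    (hF : ∀ z : Fin k → ℝ, 0 ≤ Ffun m G z) {v : EuclideanSpace ℝ (Fin n) → Fin k → ℝ}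
    (hv : ∀ j, MemLp (fun x => v x j) 2 volume) (ω : Fin k → ℝ) : 0 ≤ En m G v ω := by
  have hG := neg_half_mass_le_integral_comp hF hv
  have hquad : ∑ j, (m j) ^ 2 * ∫ x, (v x j) ^ 2 ≤
      ∑ j, ((∫ x, ‖gradient (fun y => v y j) x‖ ^ 2) + ((m j) ^ 2 + (ω j) ^ 2) * ∫ x, (v x j) ^ 2) :=
    Finset.sum_le_sum fun j _ => by
      have hgrad : 0 ≤ ∫ x, ‖gradient (fun y => v y j) x‖ ^ 2 :=
        integral_nonneg fun _ => sq_nonneg _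
      have hmass : 0 ≤ ∫ x, (v x j) ^ 2 := integral_nonneg fun _ => sq_nonneg _
      nlinarith [sq_nonneg (ω j)]
  simp only [En]
  linarith

lemma sInf_En_le {n k : ℕ} {m : Fin k → ℝ} {G : (Fin k → ℝ) → ℝ}
    (hF : ∀ z : Fin k → ℝ, 0 ≤ Ffun m G z) {σ : Fin k → ℝ}
    {u : EuclideanSpace ℝ (Fin n) → Fin k → ℝ} {ω : Fin k → ℝ} (h : InMr σ u ω) :
    sInf {r | ∃ v τ, InMr (n := n) σ v τ ∧ r = En m G v τ} ≤ En m G u ω := by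
  refine csInf_le ⟨0, ?_⟩ ⟨u, ω, h, rfl⟩
  rintro _ ⟨v, τ, hv, rfl⟩
  exact En_nonneg hF (fun j => (hv.1.1 j).1) τ

lemma continuous_En {n k : ℕ} (m : Fin k → ℝ) (G : (Fin k → ℝ) → ℝ)
    (u : EuclideanSpace ℝ (Fin n) → Fin k → ℝ) : Continuous (En m G u) := by
  unfold En
  fun_prop

lemma continuousAt_Lam {n k : ℕ} (m : Fin k → ℝ) (G : (Fin k → ℝ) → ℝ)
    (u : EuclideanSpace ℝ (Fin n) → Fin k → ℝ) {ω : Fin k → ℝ} (h : ∑ j, Ch u ω j ≠ 0) :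
    ContinuousAt (Lam m G u) ω := by
  have hCh : Continuous fun ω => ∑ j, Ch u ω j := by
    unfold Ch
    fun_prop
  exact (continuous_En m G u).continuousAt.div hCh.continuousAt h

lemma Ch_rescale {n k : ℕ} {σ₀ : Fin k → ℝ} {u : EuclideanSpace ℝ (Fin n) → Fin k → ℝ}
    {ω₀ : Fin k → ℝ} (hCh : ∀ j, Ch u ω₀ j = σ₀ j) (hσ₀ : ∀ j, σ₀ j ≠ 0) (σ : Fin k → ℝ)
    (j : Fin k) : Ch u (fun j => ω₀ j * σ j / σ₀ j) j = σ j := by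
  have := hCh j
  unfold Ch at this ⊢
  field_simp [hσ₀ j]
  rw [← this]
  ring

lemma InMr_rescale {n k : ℕ} {σ₀ σ : Fin k → ℝ} {u : EuclideanSpace ℝ (Fin n) → Fin k → ℝ}
    {ω₀ : Fin k → ℝ} (h : InMr σ₀ u ω₀) (hσ₀ : ∀ j, 0 < σ₀ j) (hσ : ∀ j, 0 ≤ σ j) :
    InMr σ u (fun j => ω₀ j * σ j / σ₀ j) := by
  obtain ⟨⟨hu, hω₀, hCh⟩, hrad⟩ := h
  exact ⟨⟨hu, fun j => by have := hω₀ j; have := hσ j; have := hσ₀ j; positivity,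
    Ch_rescale hCh (fun j => (hσ₀ j).ne') σ⟩, hrad⟩

lemma abs_le_vnorm {k : ℕ} (z : Fin k → ℝ) (j : Fin k) : |z j| ≤ vnorm z := by
  rw [← Real.sqrt_sq_eq_abs]
  exact Real.sqrt_le_sqrt
    (Finset.single_le_sum (f := fun i => (z i) ^ 2) (fun i _ => sq_nonneg _) (Finset.mem_univ j))

lemma exists_forall_vnorm_sub_lt_of_eventually {k : ℕ} {P : (Fin k → ℝ) → Prop}
    {σ₀ : Fin k → ℝ} (h : ∀ᶠ σ in 𝓝 σ₀, P σ) :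
    ∃ δ > (0 : ℝ), ∀ σ, vnorm (fun j => σ j - σ₀ j) < δ → P σ := by
  obtain ⟨δ, hδ, hP⟩ := Metric.eventually_nhds_iff.1 h
  refine ⟨δ, hδ, fun σ hσ => hP ((dist_pi_lt_iff hδ).2 fun j => ?_)⟩
  rw [Real.dist_eq]
  exact (abs_le_vnorm (fun j => σ j - σ₀ j) j).trans_lt hσ

theorem statement17_general
    (n k : ℕ) (hk : 1 ≤ k)
    (m : Fin k → ℝ)
    (G : (Fin k → ℝ) → ℝ)
    (hA1 : (∀ z : Fin k → ℝ, 0 ≤ Ffun m G z) ∧ G 0 = 0)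
    (η : ℝ)
    (σ₀ : Fin k → ℝ) (hσ₀ : ∀ j, 0 < σ₀ j)
    (u₀ : EuclideanSpace ℝ (Fin n) → Fin k → ℝ) (ω₀ : Fin k → ℝ)
    (h₀ : InMr σ₀ u₀ ω₀)
    (hΛ : Lam m G u₀ ω₀ < Real.sqrt (2 * alphaInf m G) + η) :
    ∃ δ > (0 : ℝ), ∀ σ : Fin k → ℝ, (∀ j, 0 < σ j) →
      vnorm (fun j => σ j - σ₀ j) < δ →
      InMr σ u₀ (fun j => ω₀ j * σ j / σ₀ j) ∧
      Lam m G u₀ (fun j => ω₀ j * σ j / σ₀ j) < Real.sqrt (2 * alphaInf m G) + η ∧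
      sInf {r | ∃ v τ, InMr (n := n) σ v τ ∧ r = En m G v τ}
        < (Real.sqrt (2 * alphaInf m G) + η) * ∑ j, σ j := by
  set ωσ : (Fin k → ℝ) → Fin k → ℝ := fun σ j => ω₀ j * σ j / σ₀ j
  have hCh : ∀ σ j, Ch u₀ (ωσ σ) j = σ j := Ch_rescale h₀.1.2.2 fun j => (hσ₀ j).ne'
  have hσ₀sum : 0 < ∑ j, σ₀ j := Finset.sum_pos (fun j _ => hσ₀ j) ⟨⟨0, hk⟩, Finset.mem_univ _⟩
  have hω₀ : ωσ σ₀ = ω₀ := funext fun j => mul_div_cancel_right₀ _ (hσ₀ j).ne'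
  have hLamω₀ : ContinuousAt (Lam m G u₀) (ωσ σ₀) := by
    rw [hω₀]
    exact continuousAt_Lam m G u₀ (by simpa only [h₀.1.2.2] using hσ₀sum.ne')
  have hcont : ContinuousAt (fun σ => Lam m G u₀ (ωσ σ)) σ₀ := hLamω₀.comp
    (continuous_pi fun j => (continuous_const.mul (continuous_apply j)).div_const _).continuousAt
  obtain ⟨δ, hδ, hLam⟩ := exists_forall_vnorm_sub_lt_of_eventually
    (hcont.eventually (gt_mem_nhds (hω₀ ▸ hΛ)))
  refine ⟨δ, hδ, fun σ hσ hσδ => ⟨InMr_rescale h₀ hσ₀ fun j => (hσ j).le, hLam σ hσδ, ?_⟩⟩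
  have hσsum : 0 < ∑ j, σ j := Finset.sum_pos (fun j _ => hσ j) ⟨⟨0, hk⟩, Finset.mem_univ _⟩
  calc _ ≤ En m G u₀ (ωσ σ) := sInf_En_le hA1.1 (InMr_rescale h₀ hσ₀ fun j => (hσ j).le)
    _ = Lam m G u₀ (ωσ σ) * ∑ j, σ j := by
      rw [Lam, Finset.sum_congr rfl fun j _ => hCh σ j, div_mul_cancel₀ _ hσsum.ne']
    _ < _ := mul_lt_mul_of_pos_right (hLam σ hσδ) hσsum

/-- If `E` attains its infimum over `M_{σ₀}^r` at `(u₀, ω₀)` with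
`Λ(u₀,ω₀) < √(2α) + η`, then for all `σ` close enough to `σ₀` the rescaled pair
`(u₀, ω_σ)`, `ω_σ^j = ω₀^j σ_j/σ₀^j`, lies in `M_σ^r`, satisfies
`Λ(u₀, ω_σ) < √(2α) + η`, and `inf_{M_σ^r} E < (√(2α) + η)·∑_j σ_j`. -/
theorem statement17
    (n k : ℕ) (hn : 3 ≤ n) (hk : 1 ≤ k)
    (m : Fin k → ℝ) (hm : ∀ j, 0 < m j) (hmono : Monotone m)
    (G : (Fin k → ℝ) → ℝ) (hG : ContDiff ℝ 1 G)
    (hA1 : (∀ z : Fin k → ℝ, 0 ≤ Ffun m G z) ∧ G 0 = 0)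
    (hA2 : ∃ c > (0 : ℝ), ∃ p q : ℝ, 2 < p ∧ p ≤ q ∧ q < 2 * n / ((n : ℝ) - 2) ∧
      ∀ z : Fin k → ℝ, vnorm (fun j => pd G j z) ≤ c * (vnorm z ^ (p - 1) + vnorm z ^ (q - 1)))
    (η : ℝ) (hη : 0 < η)
    (σ₀ : Fin k → ℝ) (hσ₀ : ∀ j, 0 < σ₀ j)
    (u₀ : EuclideanSpace ℝ (Fin n) → Fin k → ℝ) (ω₀ : Fin k → ℝ)
    (h₀ : InMr σ₀ u₀ ω₀)
    (hmin : ∀ v τ, InMr (n := n) σ₀ v τ → En m G u₀ ω₀ ≤ En m G v τ)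
    (hΛ : Lam m G u₀ ω₀ < Real.sqrt (2 * alphaInf m G) + η) :
    ∃ δ > (0 : ℝ), ∀ σ : Fin k → ℝ, (∀ j, 0 < σ j) →
      vnorm (fun j => σ j - σ₀ j) < δ →
      InMr σ u₀ (fun j => ω₀ j * σ j / σ₀ j) ∧
      Lam m G u₀ (fun j => ω₀ j * σ j / σ₀ j) < Real.sqrt (2 * alphaInf m G) + η ∧
      sInf {r | ∃ v τ, InMr (n := n) σ v τ ∧ r = En m G v τ}
        < (Real.sqrt (2 * alphaInf m G) + η) * ∑ j, σ j :=
  statement17_general n k hk m G hA1 η σ₀ hσ₀ u₀ ω₀ h₀ hΛ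
end
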